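/- Let d ≥ 1 and let G = (V,E,L) be a looped simple graph which is an ℛ_d-circuit. If a vertex v of G is incident with d loops of G, then ṗ(v) = 0 for every infinitesimal motion ṗ of every generic realisation (G,p,q) in ℝ^d; more generally, for any loop ℓ of an ℛ_d-circuit G and any generic (p,q), the kernels of R(G,p,q) and R(G − ℓ, p, q) coincide. -/

import Mathlib

/-- The row of the bar-joint rigidity matrix in `ℝ^d` corresponding to an (unordered) edge:
for the edge `{u,v}` it has `p u - p v` in the columns of `u`, `p v - p u` in the columns
of `v`, and zeros elsewhere. -/
noncomputable def edgeRow {V : Type*} [DecidableEq V] (d : ℕ) (p : V → Fin d → ℝ) :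
    Sym2 V → (V × Fin d → ℝ) :=
  Sym2.lift ⟨fun u v x =>
      (if x.1 = u then p u x.2 - p v x.2 else 0) +
      (if x.1 = v then p v x.2 - p u x.2 else 0),
    fun u v => funext fun x => add_comm _ _⟩

/-- A looped simple graph: a simple graph together with a family of loops, each loop
incident to a single vertex (a vertex may carry several loops). `Λ` indexes the loops. -/
structure LoopedGraph (V : Type*) (Λ : Type*) where
  graph : SimpleGraph V
  loopAt : Λ → V

/-- The rigidity matrix of a linearly constrained framework `(G,p,q)` in `ℝ^d`. -/
noncomputable def lcRigidityMatrix {V Λ : Type*} [DecidableEq V] (d : ℕ)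
    (G : LoopedGraph V Λ) (p : V → Fin d → ℝ) (q : Λ → Fin d → ℝ) :
    Matrix (↥G.graph.edgeSet ⊕ Λ) (V × Fin d) ℝ :=
  Matrix.of fun r x =>
    match r with
    | Sum.inl e => edgeRow d p e.1 x
    | Sum.inr j => if x.1 = G.loopAt j then q j x.2 else 0

/-- `(p,q)` is generic if the coordinates of `p` and `q` together are algebraically
independent over `ℚ`. -/
def GenericPQ {V Λ : Type*} (d : ℕ) (p : V → Fin d → ℝ) (q : Λ → Fin d → ℝ) : Prop :=
  AlgebraicIndependent ℚ
    (Sum.elim (fun x : V × Fin d => p x.1 x.2) (fun y : Λ × Fin d => q y.1 y.2))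

/-- A looped simple graph is an `ℛ_d`-circuit if, for every generic `(p,q)`, the rows of
its rigidity matrix are linearly dependent but the rows corresponding to any proper
subgraph (i.e. any proper subset of the edges and loops) are linearly independent. -/
def RCircuit {V Λ : Type*} [DecidableEq V] (d : ℕ) (G : LoopedGraph V Λ) : Prop :=
  ∀ (p : V → Fin d → ℝ) (q : Λ → Fin d → ℝ), GenericPQ d p q →
    (¬ LinearIndependent ℝ (fun r => lcRigidityMatrix d G p q r)) ∧
    (∀ S : Set (↥G.graph.edgeSet ⊕ Λ), S ≠ Set.univ →
      LinearIndependent ℝ (fun r : ↥S => lcRigidityMatrix d G p q r.1))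

/-! The `d` loops at `v` give `d` rows of the rigidity matrix supported on the columns of `v`,
whose entries there form the matrix `(q(ℓᵢ))ᵢ`; its determinant is a nonzero polynomial in
algebraically independent coordinates, so these rows alone force `ṗ(v) = 0`.
For the second part, minimal dependence of the rows means that every row, in particular the
row of `ℓ`, lies in the span of the others, so deleting it does not enlarge the kernel. -/

open Matrix Submodule Set

theorem Matrix.det_ne_zero_of_algebraicIndependent {n R A : Type*} [Fintype n] [DecidableEq n]
    [CommRing R] [Nontrivial R] [CommRing A] [Algebra R A] (M : Matrix n n A)
    (hM : AlgebraicIndependent R fun ij : n × n => M ij.1 ij.2) : M.det ≠ 0 := by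
  rw [← mvPolynomialX_mapMatrix_aeval R M, ← AlgHom.map_det]
  exact (map_ne_zero_iff _ hM).mpr (det_mvPolynomialX_ne_zero n R)

theorem Set.nonempty_fin_embedding_of_le_ncard {α : Type*} {s : Set α} {n : ℕ}
    (hn : n ≤ s.ncard) : Nonempty (Fin n ↪ s) := by
  by_cases hs : s.Finite
  · have := hs.fintype
    apply Function.Embedding.nonempty_of_card_le
    rwa [Fintype.card_fin, ← Nat.card_eq_fintype_card, Nat.card_coe_set_eq]
  · exact ⟨Fin.valEmbedding.trans (Set.Infinite.natEmbedding s hs)⟩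

theorem mem_span_image_compl_of_minimal_dependent {ι K M : Type*} [DivisionRing K]
    [AddCommGroup M] [Module K M] {v : ι → M} (hdep : ¬ LinearIndependent K v)
    (hmin : ∀ S : Set ι, S ≠ univ → LinearIndepOn K v S) (i : ι) :
    v i ∈ span K (v '' {i}ᶜ) := by
  by_contra hi
  have hindep : LinearIndepOn K v (insert i ({i}ᶜ : Set ι)) :=
    (linearIndepOn_insert (notMem_compl_iff.mpr (mem_singleton i))).mpr
      ⟨hmin {i}ᶜ (compl_ne_univ.mpr (singleton_nonempty i)), hi⟩
  rw [insert_eq, union_compl_self, linearIndepOn_univ_iff] at hindep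
  exact hdep hindep

theorem Matrix.mulVec_eq_zero_iff_submatrix_of_mem_span {m m' n R : Type*} [Fintype n]
    [CommSemiring R] (A : Matrix m n R) (e : m' → m) {i : m}
    (hi : A i ∈ span R ((fun r => A r) '' {i}ᶜ)) (he : {i}ᶜ ⊆ range e) (x : n → R) :
    A *ᵥ x = 0 ↔ A.submatrix e id *ᵥ x = 0 := by
  refine ⟨fun hx => funext fun r => congrFun hx (e r), fun hx => ?_⟩
  have hrows : ∀ r ∈ ({i}ᶜ : Set m), A r ⬝ᵥ x = 0 := by
    rintro r hr
    obtain ⟨r', rfl⟩ := he hr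
    exact congrFun hx r'
  funext r
  by_cases hr : r = i
  · subst hr
    show A r ⬝ᵥ x = 0
    refine span_induction (p := fun y _ => y ⬝ᵥ x = 0) ?_ (zero_dotProduct x)
      (fun a b _ _ ha hb => ?_) (fun c a _ ha => ?_) hi
    · rintro _ ⟨r', hr', rfl⟩
      exact hrows r' hr'
    · rw [add_dotProduct, ha, hb, add_zero]
    · rw [smul_dotProduct, ha, smul_zero]
  · exact hrows r hr

theorem lcRigidityMatrix_mulVec_inr {V Λ : Type*} [Fintype V] [DecidableEq V] {d : ℕ}
    (G : LoopedGraph V Λ) (p : V → Fin d → ℝ) (q : Λ → Fin d → ℝ) (x : V × Fin d → ℝ)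
    (j : Λ) :
    (lcRigidityMatrix d G p q *ᵥ x) (Sum.inr j) = q j ⬝ᵥ fun k => x (G.loopAt j, k) := by
  simp [mulVec, dotProduct, lcRigidityMatrix, Fintype.sum_prod_type, ite_mul]

theorem motion_eq_zero_of_loops {V Λ : Type*} [Fintype V] [DecidableEq V] {d : ℕ}
    (G : LoopedGraph V Λ) {p : V → Fin d → ℝ} {q : Λ → Fin d → ℝ} (hpq : GenericPQ d p q)
    {v : V} (f : Fin d ↪ Λ) (hf : ∀ i, G.loopAt (f i) = v) {pdot : V → Fin d → ℝ}
    (hpdot : lcRigidityMatrix d G p q *ᵥ (fun x => pdot x.1 x.2) = 0) : pdot v = 0 := by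
  let Q : Matrix (Fin d) (Fin d) ℝ := of fun i k => q (f i) k
  have hQ : Q.det ≠ 0 := Q.det_ne_zero_of_algebraicIndependent <|
    hpq.comp (Sum.inr ∘ Prod.map f id)
      (Sum.inr_injective.comp (f.injective.prodMap Function.injective_id))
  refine eq_zero_of_mulVec_eq_zero hQ (funext fun i => ?_)
  have hrow := congrFun hpdot (Sum.inr (f i))
  rwa [lcRigidityMatrix_mulVec_inr, hf] at hrow

theorem rcircuit_loop_kernel_general {V Λ : Type} [Fintype V] [DecidableEq V]
    (d : ℕ) (G : LoopedGraph V Λ) (hG : RCircuit d G) :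
    (∀ v : V, d ≤ {j : Λ | G.loopAt j = v}.ncard →
      ∀ (p : V → Fin d → ℝ) (q : Λ → Fin d → ℝ), GenericPQ d p q →
        ∀ pdot : V → Fin d → ℝ,
          (lcRigidityMatrix d G p q).mulVec (fun x => pdot x.1 x.2) = 0 → pdot v = 0) ∧
    (∀ ℓ : Λ, ∀ (p : V → Fin d → ℝ) (q : Λ → Fin d → ℝ), GenericPQ d p q →
      {x : V × Fin d → ℝ | (lcRigidityMatrix d G p q).mulVec x = 0} =
      {x : V × Fin d → ℝ | ((lcRigidityMatrix d G p q).submatrix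
          (Sum.map id (Subtype.val : {j : Λ // j ≠ ℓ} → Λ)) id).mulVec x = 0}) := by
  refine ⟨fun v hv p q hpq pdot hpdot => ?_, fun ℓ p q hpq => ?_⟩
  · obtain ⟨f⟩ := nonempty_fin_embedding_of_le_ncard hv
    exact motion_eq_zero_of_loops G hpq (f.trans (Function.Embedding.subtype _))
      (fun i => (f i).2) hpdot
  · obtain ⟨hdep, hmin⟩ := hG p q hpq
    ext x
    refine mulVec_eq_zero_iff_submatrix_of_mem_span _ _
      (mem_span_image_compl_of_minimal_dependent hdep hmin (Sum.inr ℓ)) ?_ x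
    rintro (e | j) hj
    exacts [⟨.inl e, rfl⟩, ⟨.inr ⟨j, fun h => hj (h ▸ rfl)⟩, rfl⟩]

/-- If `G` is an `ℛ_d`-circuit then: any vertex incident with `d`
loops of `G` is fixed by every infinitesimal motion of every generic realisation; more
generally, for any loop `ℓ` and any generic `(p,q)` the kernels of `R(G,p,q)` and
`R(G-ℓ,p,q)` coincide. -/
theorem rcircuit_loop_kernel {V Λ : Type} [Fintype V] [DecidableEq V] [Fintype Λ]
    (d : ℕ) (hd : 1 ≤ d) (G : LoopedGraph V Λ) (hG : RCircuit d G) :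
    (∀ v : V, d ≤ {j : Λ | G.loopAt j = v}.ncard →
      ∀ (p : V → Fin d → ℝ) (q : Λ → Fin d → ℝ), GenericPQ d p q →
        ∀ pdot : V → Fin d → ℝ,
          (lcRigidityMatrix d G p q).mulVec (fun x => pdot x.1 x.2) = 0 → pdot v = 0) ∧
    (∀ ℓ : Λ, ∀ (p : V → Fin d → ℝ) (q : Λ → Fin d → ℝ), GenericPQ d p q →
      {x : V × Fin d → ℝ | (lcRigidityMatrix d G p q).mulVec x = 0} =
      {x : V × Fin d → ℝ | ((lcRigidityMatrix d G p q).submatrix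
          (Sum.map id (Subtype.val : {j : Λ // j ≠ ℓ} → Λ)) id).mulVec x = 0}) :=
  rcircuit_loop_kernel_general d G hG
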